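/- arXiv:math-ph/0407018 — 3 statements merged into one kernel-verified Lean document; each statement's English description precedes it below -/
import Mathlib

section
/- Let U ⊆ ℂ be open, ζ ∈ U, A : U → M_r(ℂ) holomorphic, and let p, q ∈ ℂ^r be column vectors with A(ζ)·p = 0. Then the matrix function z ↦ A(z)·(1 − p q^T/(z − ζ)), defined on U \ {ζ}, extends holomorphically to all of U. -/
open Complex Matrix Set

attribute [local instance] Matrix.linftyOpNormedRing Matrix.linftyOpNormedAlgebra

/-- Since `A(ζ) p = 0`, the pole of `A(z) p qᵀ / (z - ζ)` is cancelled by the zero of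
`A(z) p = (A(z) - A(ζ)) p`. -/
theorem mul_smul_vecMulVec_eq_dslope_mul {n : Type*} [Fintype n] [DecidableEq n]
    {A : ℂ → Matrix n n ℂ} {ζ z : ℂ} {p q : n → ℂ} (hp : A ζ *ᵥ p = 0) (hz : z ≠ ζ) :
    A z * ((z - ζ)⁻¹ • vecMulVec p q) = dslope A ζ z * vecMulVec p q := by
  rw [dslope_of_ne _ hz, slope_def_module, smul_mul_assoc, sub_mul, mul_vecMulVec (A ζ), hp,
    zero_vecMulVec, sub_zero, mul_smul_comm]

/-- If `A` is holomorphic on `U`, `ζ ∈ U` and `A(ζ)p = 0`, then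
`z ↦ A(z)(1 − pqᵀ/(z − ζ))` extends holomorphically across `ζ`. -/
theorem statement8 (r : ℕ) (U : Set ℂ) (hU : IsOpen U) (ζ : ℂ) (hζ : ζ ∈ U)
    (A : ℂ → Matrix (Fin r) (Fin r) ℂ) (hA : DifferentiableOn ℂ A U)
    (p q : Fin r → ℂ) (hp : A ζ *ᵥ p = 0) :
    ∃ B : ℂ → Matrix (Fin r) (Fin r) ℂ, DifferentiableOn ℂ B U ∧
      ∀ z ∈ U \ {ζ},
        B z = A z * ((1 : Matrix (Fin r) (Fin r) ℂ) - (z - ζ)⁻¹ • Matrix.vecMulVec p q) := by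
  refine ⟨fun z => A z - dslope A ζ z * vecMulVec p q, ?_, ?_⟩
  · have hdslope : DifferentiableOn ℂ (dslope A ζ) U :=
      (differentiableOn_dslope (hU.mem_nhds hζ)).2 hA
    exact hA.sub (hdslope.mul_const _)
  · rintro z ⟨-, hz⟩
    rw [mul_sub, mul_one, mul_smul_vecMulVec_eq_dslope_mul hp hz]
end

section
/- Let h, ω₁, ω₂ ∈ ℂ and let A and R be r×r matrix functions with A(z + 2ω₁) = A(z) and R(z + 2ω₁ + h)·A(z) = R(z) for all z at which the functions are defined, with A(z) and R(z) invertible. Define A'(z) := R(z + h) A(z) R(z)^{−1}. Then A'(z + 2ω₁ + h) = A'(z). If moreover A(z + 2ω₂) = B₂ A(z) B₂^{−1} and R(z + 2ω₂) = B₂' R(z) B₂^{−1} for constant invertible matrices B₂, B₂', then A'(z + 2ω₂) = B₂' A'(z) (B₂')^{−1}. -/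
open Complex Matrix

/-! Since `R(z + 2ω₁ + h) = R(z) A(z)⁻¹` and `A` is `2ω₁`-periodic, both `R(z + h)` and
`R(z)` pick up exactly the factor they need under the shift by `2ω₁ + h`:
`A'(z + 2ω₁ + h) = R(z + h) · (R(z) A(z)⁻¹)⁻¹ = A'(z)`. Along `2ω₂` the right factor `B₂⁻¹` of
`R` cancels against the conjugation `B₂ A B₂⁻¹`, leaving conjugation by `B₂'`. -/

namespace Matrix

variable {G n α : Type*} [AddCommSemigroup G] [Fintype n] [DecidableEq n] [CommRing α]

noncomputable def isomonodromyTransform (R A : G → Matrix n n α) (h z : G) : Matrix n n α :=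
  R (z + h) * A z * (R z)⁻¹

theorem mul_nonsing_inv_nonsing_inv {B : Matrix n n α} (X : Matrix n n α) (hB : IsUnit B) :
    (X * B⁻¹)⁻¹ = B * X⁻¹ := by
  rw [mul_inv_rev, nonsing_inv_nonsing_inv _ ((isUnit_iff_isUnit_det B).mp hB)]

variable {R A : G → Matrix n n α}

theorem isomonodromyTransform_add_add_eq {p h : G} (hA : Function.Periodic A p)
    (hRA : ∀ z, R (z + p + h) * A z = R z) (hAinv : ∀ z, IsUnit (A z)) (z : G) :
    isomonodromyTransform R A h (z + p + h) = isomonodromyTransform R A h z := by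
  have hR_shift : R (z + p + h) = R z * (A z)⁻¹ := by
    rw [← hRA z, mul_nonsing_inv_cancel_right _ _ ((isUnit_iff_isUnit_det _).mp (hAinv z))]
  have hRA_shift : R (z + p + h + h) * A (z + p + h) = R (z + h) := by
    rw [add_right_comm z p h, hA (z + h), hRA]
  rw [isomonodromyTransform, isomonodromyTransform, hRA_shift, hR_shift,
    mul_nonsing_inv_nonsing_inv _ (hAinv z), ← mul_assoc]

theorem isomonodromyTransform_add_eq_conj {q h : G} {B B' : Matrix n n α} (hB : IsUnit B)
    (hA : ∀ z, A (z + q) = B * A z * B⁻¹) (hR : ∀ z, R (z + q) = B' * R z * B⁻¹) (z : G) :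
    isomonodromyTransform R A h (z + q) = B' * isomonodromyTransform R A h z * B'⁻¹ := by
  have hBdet : IsUnit B.det := (isUnit_iff_isUnit_det B).mp hB
  rw [isomonodromyTransform, add_right_comm, hR, hA, hR, mul_nonsing_inv_nonsing_inv _ hB,
    mul_inv_rev, isomonodromyTransform]
  simp only [mul_assoc, nonsing_inv_mul_cancel_left _ _ hBdet]

end Matrix

theorem statement16_general (r : ℕ) (h ω₁ ω₂ : ℂ)
    (A R : ℂ → Matrix (Fin r) (Fin r) ℂ)
    (hAper : ∀ z : ℂ, A (z + 2 * ω₁) = A z)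
    (hRA : ∀ z : ℂ, R (z + 2 * ω₁ + h) * A z = R z)
    (hAinv : ∀ z : ℂ, IsUnit (A z)) :
    (∀ z : ℂ, R (z + 2 * ω₁ + h + h) * A (z + 2 * ω₁ + h) * (R (z + 2 * ω₁ + h))⁻¹ =
      R (z + h) * A z * (R z)⁻¹) ∧
    (∀ B₂ B₂' : Matrix (Fin r) (Fin r) ℂ, IsUnit B₂ → IsUnit B₂' →
      (∀ z : ℂ, A (z + 2 * ω₂) = B₂ * A z * B₂⁻¹) →
      (∀ z : ℂ, R (z + 2 * ω₂) = B₂' * R z * B₂⁻¹) →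
      ∀ z : ℂ, R (z + 2 * ω₂ + h) * A (z + 2 * ω₂) * (R (z + 2 * ω₂))⁻¹ =
        B₂' * (R (z + h) * A z * (R z)⁻¹) * B₂'⁻¹) :=
  ⟨isomonodromyTransform_add_add_eq hAper hRA hAinv,
    fun _ _ hB₂ _ hA₂ hR₂ => isomonodromyTransform_add_eq_conj hB₂ hA₂ hR₂⟩

/-- The isomonodromy transformation changing the period of the elliptic
curve: if `A(z+2ω₁) = A(z)` and `R(z+2ω₁+h)A(z) = R(z)`, then `A'(z) = R(z+h)A(z)R(z)⁻¹`
satisfies `A'(z+2ω₁+h) = A'(z)`; and if moreover `A(z+2ω₂) = B₂A(z)B₂⁻¹` and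
`R(z+2ω₂) = B₂'R(z)B₂⁻¹`, then `A'(z+2ω₂) = B₂'A'(z)(B₂')⁻¹`. -/
theorem statement16 (r : ℕ) (h ω₁ ω₂ : ℂ)
    (A R : ℂ → Matrix (Fin r) (Fin r) ℂ)
    (hAper : ∀ z : ℂ, A (z + 2 * ω₁) = A z)
    (hRA : ∀ z : ℂ, R (z + 2 * ω₁ + h) * A z = R z)
    (hAinv : ∀ z : ℂ, IsUnit (A z)) (hRinv : ∀ z : ℂ, IsUnit (R z)) :
    (∀ z : ℂ, R (z + 2 * ω₁ + h + h) * A (z + 2 * ω₁ + h) * (R (z + 2 * ω₁ + h))⁻¹ =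
      R (z + h) * A z * (R z)⁻¹) ∧
    (∀ B₂ B₂' : Matrix (Fin r) (Fin r) ℂ, IsUnit B₂ → IsUnit B₂' →
      (∀ z : ℂ, A (z + 2 * ω₂) = B₂ * A z * B₂⁻¹) →
      (∀ z : ℂ, R (z + 2 * ω₂) = B₂' * R z * B₂⁻¹) →
      ∀ z : ℂ, R (z + 2 * ω₂ + h) * A (z + 2 * ω₂) * (R (z + 2 * ω₂))⁻¹ =
        B₂' * (R (z + h) * A z * (R z)⁻¹) * B₂'⁻¹) :=
  statement16_general r h ω₁ ω₂ A R hAper hRA hAinv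
end

section
/- Let A be an r×r matrix function, holomorphic on an open set containing the closed strip {x ≤ Re z ≤ x+1} (x ∈ ℝ), satisfying A(z̄)^* = A(z)^{−1} there. Let F be a row-vector-valued function (values in ℂ^{1×r}), continuous on the closed strip, holomorphic in its interior, satisfying F(ξ+1)·A(ξ) = F(ξ) for all ξ with Re ξ = x, and suppose there exist C > 0 and δ > 0 with ‖F(z)‖ ≤ C(1 + |Im z|)^{−1−δ} on the strip. Then F is identically zero. -/
open Complex Matrix Set

attribute [local instance] Matrix.linftyOpNormedRing Matrix.linftyOpNormedAlgebra

open Filter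


lemma conjConj_diffAt {f : ℂ → ℂ} {z : ℂ} (hf : DifferentiableAt ℂ f ((starRingEnd ℂ) z)) :
    DifferentiableAt ℂ (fun w => (starRingEnd ℂ) (f ((starRingEnd ℂ) w))) z := by
  set d := deriv f ((starRingEnd ℂ) z) with hdd
  have hd : HasDerivAt f d ((starRingEnd ℂ) z) := hf.hasDerivAt
  have h1 : HasFDerivAt (fun w : ℂ => (starRingEnd ℂ) w)
      (Complex.conjCLE.toContinuousLinearMap) z := by
    exact Complex.conjCLE.hasFDerivAt (x := z)
  have h1' : HasFDerivAt (fun w : ℂ => (starRingEnd ℂ) w)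
      (Complex.conjCLE.toContinuousLinearMap) (f ((starRingEnd ℂ) z)) := by
    exact Complex.conjCLE.hasFDerivAt (x := f ((starRingEnd ℂ) z))
  have h2 := (hd.hasFDerivAt.restrictScalars ℝ).comp z h1
  have h3 := h1'.comp z h2
  have H : Complex.conjCLE.toContinuousLinearMap.comp
          (((ContinuousLinearMap.toSpanSingleton ℂ d).restrictScalars ℝ).comp
            Complex.conjCLE.toContinuousLinearMap)
      = (ContinuousLinearMap.smulRight (1 : ℂ →L[ℂ] ℂ) ((starRingEnd ℂ) d)).restrictScalars ℝ := by
    ext w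
    simp [mul_comm]
  rw [H] at h3
  have h4 : HasFDerivAt (fun w => (starRingEnd ℂ) (f ((starRingEnd ℂ) w)))
      (ContinuousLinearMap.smulRight (1 : ℂ →L[ℂ] ℂ) ((starRingEnd ℂ) d)) z :=
    hasFDerivAt_of_restrictScalars ℝ (by simpa [Function.comp_def] using h3) rfl
  exact h4.differentiableAt

lemma strip_preconn (x : ℝ) : IsPreconnected {z : ℂ | x ≤ z.re ∧ z.re ≤ x + 1} := by
  have : {z : ℂ | x ≤ z.re ∧ z.re ≤ x + 1} = Complex.re ⁻¹' Icc x (x + 1) := rfl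
  rw [this]
  exact ((convex_Icc x (x+1)).linear_preimage Complex.reLm).isPreconnected

lemma openstrip_preconn (x : ℝ) : IsPreconnected {z : ℂ | x < z.re ∧ z.re < x + 1} := by
  have : {z : ℂ | x < z.re ∧ z.re < x + 1} = Complex.re ⁻¹' Ioo x (x + 1) := rfl
  rw [this]
  exact ((convex_Ioo x (x+1)).linear_preimage Complex.reLm).isPreconnected

lemma openstrip_isOpen (x : ℝ) : IsOpen {z : ℂ | x < z.re ∧ z.re < x + 1} :=
  isOpen_Ioo.preimage Complex.continuous_re

lemma closure_openstrip (x : ℝ) :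
    closure {z : ℂ | x < z.re ∧ z.re < x + 1} = {z : ℂ | x ≤ z.re ∧ z.re ≤ x + 1} := by
  have h1 : {z : ℂ | x < z.re ∧ z.re < x + 1} = Complex.re ⁻¹' Ioo x (x + 1) := rfl
  rw [h1, Complex.closure_preimage_re, closure_Ioo (by linarith : x ≠ x + 1)]
  rfl

lemma finalStep (r : ℕ) (x : ℝ) (F : ℂ → Fin r → ℂ)
    (hFcont : ContinuousOn F {z : ℂ | x ≤ z.re ∧ z.re ≤ x + 1})
    (hFhol : DifferentiableOn ℂ F {z : ℂ | x < z.re ∧ z.re < x + 1})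
    (hzeros : ∀ j, ∃ᶠ z in nhdsWithin (((x + 2⁻¹ : ℝ) : ℂ)) {(((x + 2⁻¹:ℝ)):ℂ)}ᶜ, F z j = 0) :
    ∀ z : ℂ, x ≤ z.re ∧ z.re ≤ x + 1 → F z = 0 := by
  set S := {z : ℂ | x < z.re ∧ z.re < x + 1} with hS
  have hSopen : IsOpen S := openstrip_isOpen x
  have hz₀ : (((x + 2⁻¹ : ℝ)) : ℂ) ∈ S := by
    constructor <;> simp <;> norm_num
  have hzeroS : ∀ j, EqOn (fun z => F z j) 0 S := by
    intro j
    have hana : AnalyticOnNhd ℂ (fun z => F z j) S :=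
      ((differentiableOn_pi.mp hFhol) j).analyticOnNhd hSopen
    exact hana.eqOn_zero_of_preconnected_of_frequently_eq_zero (openstrip_preconn x) hz₀
      (hzeros j)
  intro z hz
  have hzc : z ∈ closure S := by rw [hS, closure_openstrip x]; exact hz
  have hne : (nhdsWithin z S).NeBot := mem_closure_iff_nhdsWithin_neBot.mp hzc
  have h1 : Filter.Tendsto F (nhdsWithin z S) (nhds (F z)) :=
    ((hFcont z hz).mono (fun w hw => ⟨le_of_lt hw.1, le_of_lt hw.2⟩)).tendsto
  have h2 : Filter.Tendsto F (nhdsWithin z S) (nhds 0) := by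
    refine Filter.Tendsto.congr' ?_ tendsto_const_nhds
    filter_upwards [self_mem_nhdsWithin] with w hw
    exact (funext fun j => hzeroS j hw).symm
  exact tendsto_nhds_unique h1 h2

lemma det_diffOn (r : ℕ) (A : ℂ → Matrix (Fin r) (Fin r) ℂ) (U : Set ℂ)
    (h : DifferentiableOn ℂ A U) : DifferentiableOn ℂ (fun z => (A z).det) U := by
  have hentry : ∀ (M : Matrix (Fin r) (Fin r) ℂ) (i j : Fin r), ‖M i j‖ ≤ ‖M‖ := by
    intro M i j
    have h1 : ‖M i j‖₊ ≤ ∑ j', ‖M i j'‖₊ :=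
      Finset.single_le_sum (f := fun j' => ‖M i j'‖₊) (fun _ _ => zero_le) (Finset.mem_univ j)
    have h3 : ‖M i j‖₊ ≤ ‖M‖₊ := by
      rw [Matrix.linfty_opNNNorm_def]
      exact h1.trans (Finset.le_sup (f := fun i' => ∑ j', ‖M i' j'‖₊) (Finset.mem_univ i))
    exact_mod_cast h3
  have hent : ∀ i j : Fin r, DifferentiableOn ℂ (fun z => A z i j) U := by
    intro i j
    let lin : Matrix (Fin r) (Fin r) ℂ →ₗ[ℂ] ℂ :=
      { toFun := fun M => M i j, map_add' := fun _ _ => rfl, map_smul' := fun _ _ => rfl }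
    let e : Matrix (Fin r) (Fin r) ℂ →L[ℂ] ℂ :=
      LinearMap.mkContinuous lin 1 (fun M => by rw [one_mul]; exact hentry M i j)
    exact e.differentiable.comp_differentiableOn h
  have h2 : DifferentiableOn ℂ
      (fun z => ∑ σ : Equiv.Perm (Fin r),
        ((Equiv.Perm.sign σ : ℤ) : ℂ) * ∏ i, A z (σ i) i) U := by
    apply DifferentiableOn.fun_sum
    intro σ _
    exact (DifferentiableOn.fun_finset_prod (fun i _ => hent (σ i) i)).const_mul _
  exact h2.congr (fun z _ => Matrix.det_apply' (A z))

lemma degenCase (r : ℕ) (x : ℝ) (F : ℂ → Fin r → ℂ)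
    (hFcont : ContinuousOn F {z : ℂ | x ≤ z.re ∧ z.re ≤ x + 1})
    (hFhol : DifferentiableOn ℂ F {z : ℂ | x < z.re ∧ z.re < x + 1})
    (C δ : ℝ) (hC : 0 < C) (hδ : 0 < δ)
    (hdecay : ∀ z : ℂ, x ≤ z.re ∧ z.re ≤ x + 1 →
      ‖F z‖ ≤ C * (1 + |z.im|) ^ (-(1 + δ)))
    (hA0 : ∀ ξ : ℂ, ξ.re = x → F ξ = 0) :
    ∀ z : ℂ, z.re = x + 2⁻¹ → F z = 0 := by
  have hK : ∀ z : ℂ, x ≤ z.re ∧ z.re ≤ x + 1 → ‖F z‖ ≤ C := by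
    intro z hz
    refine (hdecay z hz).trans ?_
    calc C * (1 + |z.im|) ^ (-(1+δ)) ≤ C * 1 := by
          refine mul_le_mul_of_nonneg_left ?_ hC.le
          exact Real.rpow_le_one_of_one_le_of_nonpos
            (by linarith [abs_nonneg z.im]) (by linarith)
      _ = C := mul_one C
  set c : ℂ := ((2*x+1 : ℝ) : ℂ) with hc
  have hσK : ∀ z : ℂ, x ≤ z.re ∧ z.re ≤ x + 1 →
      x ≤ ((starRingEnd ℂ) (c - z)).re ∧ ((starRingEnd ℂ) (c - z)).re ≤ x + 1 := by
    intro z hz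
    simp only [Complex.conj_re, Complex.sub_re, hc, Complex.ofReal_re]
    constructor <;> [linarith [hz.2]; linarith [hz.1]]
  intro z₀ hz₀
  have hσz₀ : (starRingEnd ℂ) (c - z₀) = z₀ := by
    apply Complex.ext
    · simp [hc, hz₀]; ring
    · simp [hc]
  funext j
  -- the auxiliary function
  set h : ℂ → ℂ := fun z => F z j * (starRingEnd ℂ) (F ((starRingEnd ℂ) (c - z)) j) with hh
  have hcont2 : ContinuousOn (fun z => ((starRingEnd ℂ) (F ((starRingEnd ℂ) (c - z)) j)))
      {z : ℂ | x ≤ z.re ∧ z.re ≤ x + 1} := by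
    apply Complex.continuous_conj.comp_continuousOn
    apply (continuous_apply j).comp_continuousOn
    exact hFcont.comp (Complex.continuous_conj.comp (continuous_const.sub continuous_id)).continuousOn
      (fun z hz => hσK z hz)
  have hhzero : EqOn h 0 (Complex.re ⁻¹' Icc x (x + 1)) := by
    apply PhragmenLindelof.eq_zero_on_vertical_strip
    · constructor
      · -- differentiable on open strip
        intro z hz
        have hz' : z ∈ {z : ℂ | x < z.re ∧ z.re < x + 1} := hz
        apply DifferentiableWithinAt.mul
        · exact ((differentiableOn_pi.mp hFhol) j) z hz'
        · refine DifferentiableAt.differentiableWithinAt ?_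
          have hg : DifferentiableAt ℂ (fun w => (starRingEnd ℂ) (F ((starRingEnd ℂ) w) j))
              ((c - z)) := by
            apply conjConj_diffAt (f := fun w => F w j)
            apply ((differentiableOn_pi.mp hFhol) j).differentiableAt
            apply (openstrip_isOpen x).mem_nhds
            constructor
            · simp only [Complex.conj_re, Complex.sub_re, hc, Complex.ofReal_re]
              linarith [hz'.2]
            · simp only [Complex.conj_re, Complex.sub_re, hc, Complex.ofReal_re]
              linarith [hz'.1]
          exact (hg.comp z ((differentiableAt_const c).sub differentiableAt_id)).congr_of_eventuallyEq
            (Eventually.of_forall fun w => rfl)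
      · -- continuous on closure
        have : closure (Complex.re ⁻¹' Ioo x (x+1)) = {z : ℂ | x ≤ z.re ∧ z.re ≤ x + 1} :=
          closure_openstrip x
        rw [this]
        exact (((continuous_apply j).comp_continuousOn hFcont)).mul hcont2
    · refine ⟨0, by rw [show x + 1 - x = (1:ℝ) by ring]; simpa using Real.pi_pos, 0, ?_⟩
      rw [Asymptotics.isBigO_iff]
      refine ⟨C * C, ?_⟩
      rw [Filter.eventually_inf_principal]
      refine Eventually.of_forall fun z hz => ?_
      have hz' : x ≤ z.re ∧ z.re ≤ x + 1 := ⟨le_of_lt hz.1, le_of_lt hz.2⟩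
      have h1 : ‖F z j‖ ≤ C := le_trans (norm_le_pi_norm (F z) j) (hK z hz')
      have h2 : ‖F ((starRingEnd ℂ) (c - z)) j‖ ≤ C :=
        le_trans (norm_le_pi_norm _ j) (hK _ (hσK z hz'))
      calc ‖F z j * (starRingEnd ℂ) (F ((starRingEnd ℂ) (c - z)) j)‖
          = ‖F z j‖ * ‖F ((starRingEnd ℂ) (c - z)) j‖ := by
            rw [norm_mul, RCLike.norm_conj]
        _ ≤ C * C := mul_le_mul h1 h2 (norm_nonneg _) hC.le
        _ ≤ C * C * ‖Real.exp (0 * Real.exp (0 * |z.im|))‖ := by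
            simp only [zero_mul, Real.exp_zero, norm_one, mul_one]
            exact le_refl _
    · intro z hz
      have h1 : F z j = 0 := by rw [hA0 z hz]; rfl
      show F z j * (starRingEnd ℂ) (F ((starRingEnd ℂ) (c - z)) j) = 0
      rw [h1, zero_mul]
    · intro z hz
      have h0 : F ((starRingEnd ℂ) (c - z)) = 0 := by
        apply hA0
        simp only [Complex.conj_re, Complex.sub_re, hc, Complex.ofReal_re, hz]
        ring
      have h1 : F ((starRingEnd ℂ) (c - z)) j = 0 := by rw [h0]; rfl
      show F z j * (starRingEnd ℂ) (F ((starRingEnd ℂ) (c - z)) j) = 0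
      rw [h1, map_zero, mul_zero]
  have hz₀K : z₀ ∈ Complex.re ⁻¹' Icc x (x+1) := by
    simp only [mem_preimage, mem_Icc, hz₀]
    constructor <;> norm_num
  have := hhzero hz₀K
  rw [hh] at this
  simp only [hσz₀] at this
  have : F z₀ j * (starRingEnd ℂ) (F z₀ j) = 0 := this
  rw [Complex.mul_conj] at this
  have := Complex.ofReal_eq_zero.mp this
  simpa using Complex.normSq_eq_zero.mp this

lemma nondegenCase (r : ℕ) (x : ℝ) (A : ℂ → Matrix (Fin r) (Fin r) ℂ)
    (hAunit : ∀ z : ℂ, x ≤ z.re ∧ z.re ≤ x + 1 → (A ((starRingEnd ℂ) z))ᴴ = (A z)⁻¹)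
    (hdetan : AnalyticOnNhd ℂ (fun z => (A z).det) {z : ℂ | x ≤ z.re ∧ z.re ≤ x + 1})
    (F : ℂ → Fin r → ℂ)
    (hFcont : ContinuousOn F {z : ℂ | x ≤ z.re ∧ z.re ≤ x + 1})
    (hFhol : DifferentiableOn ℂ F {z : ℂ | x < z.re ∧ z.re < x + 1})
    (hFbd : ∀ ξ : ℂ, ξ.re = x → Matrix.vecMul (F (ξ + 1)) (A ξ) = F ξ)
    (C δ : ℝ) (hC : 0 < C) (hδ : 0 < δ)
    (hdecay : ∀ z : ℂ, x ≤ z.re ∧ z.re ≤ x + 1 →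
      ‖F z‖ ≤ C * (1 + |z.im|) ^ (-(1 + δ)))
    (hndeg : ¬ EqOn (fun z => (A z).det) 0 {z : ℂ | x ≤ z.re ∧ z.re ≤ x + 1}) :
    ∀ t ∈ Ioo x (x+1), F ((t : ℝ) : ℂ) = 0 := by
  set K := {z : ℂ | x ≤ z.re ∧ z.re ≤ x + 1} with hKdef
  set S := {z : ℂ | x < z.re ∧ z.re < x + 1} with hSdef
  have h01 : x ≤ x + 1 := by linarith
  have hconjK : ∀ z : ℂ, z ∈ K → (starRingEnd ℂ) z ∈ K := fun z hz => by
    simpa [hKdef] using hz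
  set φ : ℂ → ℂ := fun z => ∑ j, F z j * (starRingEnd ℂ) (F ((starRingEnd ℂ) z) j) with hφdef
  -- continuity of φ on K
  have hφcont : ContinuousOn φ K := by
    apply continuousOn_finset_sum
    intro j _
    apply ContinuousOn.mul
    · exact (continuous_apply j).comp_continuousOn hFcont
    · apply Complex.continuous_conj.comp_continuousOn
      apply (continuous_apply j).comp_continuousOn
      exact hFcont.comp Complex.continuous_conj.continuousOn hconjK
  -- differentiability of φ on S
  have hφdiff : DifferentiableOn ℂ φ S := by
    apply DifferentiableOn.fun_sum
    intro j _
    apply DifferentiableOn.mul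
    · exact (differentiableOn_pi.mp hFhol) j
    · intro z hz
      refine DifferentiableAt.differentiableWithinAt ?_
      apply conjConj_diffAt (f := fun w => F w j)
      apply ((differentiableOn_pi.mp hFhol) j).differentiableAt
      apply (openstrip_isOpen x).mem_nhds
      exact ⟨by simpa using hz.1, by simpa using hz.2⟩
  -- the key algebraic identity
  have key : ∀ ζ : ℂ, ζ.re = x → IsUnit (A ζ).det → φ (ζ + 1) = φ ζ := by
    intro ζ hζ hdet
    have hζK : x ≤ ζ.re ∧ ζ.re ≤ x + 1 := ⟨le_of_eq hζ.symm, by rw [hζ]; linarith⟩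
    have hu := hAunit ζ hζK
    have hb1 := hFbd ζ hζ
    have hb2 := hFbd ((starRingEnd ℂ) ζ) (by simpa using hζ)
    have hstep : φ ζ = φ (ζ + 1) := by
      calc φ ζ = F ζ ⬝ᵥ star (F ((starRingEnd ℂ) ζ)) := by
            simp [hφdef, dotProduct, Pi.star_apply, Complex.star_def]
        _ = (F (ζ+1) ᵥ* A ζ) ⬝ᵥ star (F ((starRingEnd ℂ) ζ + 1) ᵥ* A ((starRingEnd ℂ) ζ)) := by
            rw [hb1, hb2]
        _ = (F (ζ+1) ᵥ* A ζ) ⬝ᵥ ((A ((starRingEnd ℂ) ζ))ᴴ *ᵥ star (F ((starRingEnd ℂ) ζ + 1))) := by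
            rw [Matrix.star_vecMul]
        _ = ((F (ζ+1) ᵥ* A ζ) ᵥ* (A ((starRingEnd ℂ) ζ))ᴴ) ⬝ᵥ star (F ((starRingEnd ℂ) ζ + 1)) := by
            rw [Matrix.dotProduct_mulVec]
        _ = (F (ζ+1) ᵥ* (A ζ * (A ((starRingEnd ℂ) ζ))ᴴ)) ⬝ᵥ star (F ((starRingEnd ℂ) ζ + 1)) := by
            rw [Matrix.vecMul_vecMul]
        _ = F (ζ+1) ⬝ᵥ star (F ((starRingEnd ℂ) ζ + 1)) := by
            rw [hu, Matrix.mul_nonsing_inv _ hdet, Matrix.vecMul_one]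
        _ = φ (ζ + 1) := by
            simp [hφdef, dotProduct, Pi.star_apply, Complex.star_def, map_add, _root_.map_one]
    exact hstep.symm
  -- boundary relation by continuity, using isolated zeros of the determinant
  have hrel : ∀ ξ : ℂ, ξ.re = x → φ (ξ + 1) = φ ξ := by
    intro ξ hξ
    have hξK : ξ ∈ K := ⟨le_of_eq hξ.symm, by rw [hξ]; linarith⟩
    have hξ1K : ξ + 1 ∈ K := by
      constructor
      · rw [Complex.add_re, Complex.one_re, hξ]; linarith
      · rw [Complex.add_re, Complex.one_re, hξ]
    have hev : ∀ᶠ z in nhdsWithin ξ {ξ}ᶜ, (A z).det ≠ 0 := by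
      by_contra hcon
      rw [Filter.not_eventually] at hcon
      simp only [not_not] at hcon
      have hcon' : ∃ᶠ z in nhdsWithin ξ {ξ}ᶜ, (fun z => (A z).det) z = 0 := hcon
      exact hndeg (hdetan.eqOn_zero_of_preconnected_of_frequently_eq_zero
        (strip_preconn x) hξK hcon')
    set u : ℕ → ℂ := fun n => ξ + ((1/(n+1) : ℝ) : ℂ) * Complex.I with hu
    have hupos : ∀ n : ℕ, (0:ℝ) < 1/(n+1) := fun n => by positivity
    have hure : ∀ n, (u n).re = x := by intro n; simp [hu, hξ]
    have hune : ∀ n, u n ≠ ξ := by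
      intro n h
      have h2 := congrArg Complex.im h
      simp only [hu, Complex.add_im, Complex.mul_im, Complex.I_im, Complex.I_re,
        Complex.ofReal_im, Complex.ofReal_re] at h2
      have := hupos n
      simp only [mul_one, mul_zero, add_zero, zero_mul] at h2
      linarith
    have htendν : Tendsto u atTop (nhds ξ) := by
      have h0 : Tendsto (fun n : ℕ => (1/(n+1) : ℝ)) atTop (nhds 0) :=
        tendsto_one_div_add_atTop_nhds_zero_nat
      have h1 : Tendsto (fun n : ℕ => ((1/(n+1) : ℝ) : ℂ)) atTop (nhds ((0:ℝ):ℂ)) :=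
        (Complex.continuous_ofReal.tendsto 0).comp h0
      have h2 : Tendsto (fun n : ℕ => ((1/(n+1) : ℝ) : ℂ) * Complex.I) atTop (nhds 0) := by
        simpa using h1.mul_const Complex.I
      have h3 : Tendsto (fun n : ℕ => ξ + ((1/(n+1) : ℝ) : ℂ) * Complex.I) atTop
          (nhds (ξ + 0)) := tendsto_const_nhds.add h2
      rw [add_zero] at h3
      exact h3
    have htend : Tendsto u atTop (nhdsWithin ξ {ξ}ᶜ) :=
      tendsto_nhdsWithin_iff.mpr ⟨htendν, Eventually.of_forall (fun n => hune n)⟩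
    have hseq : ∀ᶠ n in atTop, φ (u n + 1) = φ (u n) := by
      filter_upwards [htend.eventually hev] with n hn
      exact key (u n) (hure n) (isUnit_iff_ne_zero.mpr hn)
    have hmemK : ∀ n, u n ∈ K := fun n => ⟨le_of_eq (hure n).symm, by rw [hure n]; linarith⟩
    have hmemK1 : ∀ n, u n + 1 ∈ K := fun n => by
      have h4 : (u n + 1).re = x + 1 := by rw [Complex.add_re, Complex.one_re, hure n]
      exact ⟨by rw [h4]; linarith, le_of_eq h4⟩
    have hT1 : Tendsto (fun n => φ (u n)) atTop (nhds (φ ξ)) :=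
      (hφcont ξ hξK).tendsto.comp
        (tendsto_nhdsWithin_iff.mpr ⟨htendν, Eventually.of_forall hmemK⟩)
    have hT2 : Tendsto (fun n => φ (u n + 1)) atTop (nhds (φ (ξ + 1))) := by
      have h5 : Tendsto (fun n => u n + 1) atTop (nhds (ξ + 1)) :=
        htendν.add tendsto_const_nhds
      exact (hφcont (ξ+1) hξ1K).tendsto.comp
        (tendsto_nhdsWithin_iff.mpr ⟨h5, Eventually.of_forall hmemK1⟩)
    exact tendsto_nhds_unique_of_eventuallyEq hT2 hT1 hseq
  -- the contour integral: horizontal integrals are independent of the height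
  have hconst : ∀ Y : ℝ,
      (∫ t in x..(x+1), φ ((t:ℂ) + (Y:ℂ) * Complex.I)) = ∫ t in x..(x+1), φ ((t:ℂ)) := by
    intro Y
    have h := Complex.integral_boundary_rect_eq_zero_of_differentiable_on_off_countable φ
      ((x:ℂ)) (⟨x+1, Y⟩ : ℂ) ∅ countable_empty ?_ ?_
    rotate_left
    · -- continuity on the closed rectangle
      apply hφcont.mono
      intro w hw
      rw [Complex.mem_reProdIm] at hw
      have h1 := hw.1
      rw [Complex.ofReal_re] at h1
      have h2 : w.re ∈ Icc x (x+1) := by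
        rw [← Set.uIcc_of_le h01]; exact h1
      exact ⟨h2.1, h2.2⟩
    · intro w hw
      apply hφdiff.differentiableAt ((openstrip_isOpen x).mem_nhds ?_)
      simp only [mem_diff, Complex.mem_reProdIm, Complex.ofReal_re] at hw
      have h1 := hw.1.1
      rw [min_eq_left h01, max_eq_right h01] at h1
      exact ⟨h1.1, h1.2⟩
    · simp only [Complex.ofReal_re, Complex.ofReal_im, Complex.ofReal_zero, zero_mul,
        add_zero] at h
      have hvert : (∫ y in (0:ℝ)..Y, φ (((x+1 : ℝ):ℂ) + (y:ℂ) * Complex.I))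
          = ∫ y in (0:ℝ)..Y, φ (((x : ℝ):ℂ) + (y:ℂ) * Complex.I) := by
        apply intervalIntegral.integral_congr
        intro y _
        show φ (((x+1:ℝ):ℂ) + (y:ℂ) * Complex.I) = φ (((x:ℝ):ℂ) + (y:ℂ) * Complex.I)
        have h1 : ((x+1:ℝ):ℂ) + (y:ℂ) * Complex.I
            = (((x:ℝ):ℂ) + (y:ℂ) * Complex.I) + 1 := by push_cast; ring
        rw [h1]
        exact hrel (((x:ℝ):ℂ) + (y:ℂ) * Complex.I) (by simp)
      rw [hvert, add_sub_cancel_right] at h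
      exact (sub_eq_zero.mp h).symm
  -- decay of the horizontal integrals
  have hMbound : ∀ Y : ℝ, 0 ≤ Y →
      ‖∫ t in x..(x+1), φ ((t:ℂ) + (Y:ℂ) * Complex.I)‖
        ≤ ((r : ℝ) * (C * (1+Y) ^ (-(1+δ)))^2) * |(x+1) - x| := by
    intro Y hY
    apply intervalIntegral.norm_integral_le_of_norm_le_const
    intro t ht
    rw [Set.uIoc_of_le h01] at ht
    set z : ℂ := (t:ℂ) + (Y:ℂ) * Complex.I with hz
    have hzre : z.re = t := by simp [hz]
    have hzim : z.im = Y := by simp [hz]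
    have hzK : z ∈ K := ⟨by rw [hzre]; exact le_of_lt ht.1, by rw [hzre]; exact ht.2⟩
    have hzcK : (starRingEnd ℂ) z ∈ K := hconjK z hzK
    have hb1 : ‖F z‖ ≤ C * (1+Y) ^ (-(1+δ)) := by
      have := hdecay z hzK
      rwa [hzim, _root_.abs_of_nonneg hY] at this
    have hb2 : ‖F ((starRingEnd ℂ) z)‖ ≤ C * (1+Y) ^ (-(1+δ)) := by
      have := hdecay ((starRingEnd ℂ) z) hzcK
      rwa [Complex.conj_im, hzim, abs_neg, _root_.abs_of_nonneg hY] at this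
    have hterm : ∀ j : Fin r, ‖F z j * (starRingEnd ℂ) (F ((starRingEnd ℂ) z) j)‖
        ≤ (C * (1+Y) ^ (-(1+δ)))^2 := by
      intro j
      rw [norm_mul, RCLike.norm_conj, sq]
      apply mul_le_mul ((norm_le_pi_norm (F z) j).trans hb1)
        ((norm_le_pi_norm (F ((starRingEnd ℂ) z)) j).trans hb2) (norm_nonneg _)
      positivity
    calc ‖φ z‖ ≤ ∑ j, ‖F z j * (starRingEnd ℂ) (F ((starRingEnd ℂ) z) j)‖ :=
          norm_sum_le _ _
      _ ≤ ∑ _j : Fin r, (C * (1+Y) ^ (-(1+δ)))^2 := Finset.sum_le_sum (fun j _ => hterm j)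
      _ = (r : ℝ) * (C * (1+Y) ^ (-(1+δ)))^2 := by
          rw [Finset.sum_const, Finset.card_univ, Fintype.card_fin, nsmul_eq_mul]
  -- conclude that the integral over the real segment vanishes
  set c₀ := ∫ t in x..(x+1), φ ((t:ℂ)) with hc₀
  have hlim : Tendsto (fun Y : ℝ => ((r:ℝ) * (C * (1+Y) ^ (-(1+δ)))^2) * |(x+1) - x|)
      atTop (nhds 0) := by
    have h1 : Tendsto (fun Y : ℝ => 1 + Y) atTop atTop :=
      tendsto_atTop_add_const_left _ 1 tendsto_id
    have h2 : Tendsto (fun Y : ℝ => (1+Y) ^ (-(1+δ))) atTop (nhds 0) :=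
      (tendsto_rpow_neg_atTop (by linarith)).comp h1
    have h3 : Tendsto (fun Y : ℝ => ((r:ℝ) * (C * (1+Y) ^ (-(1+δ)))^2) * |(x+1) - x|)
        atTop (nhds (((r:ℝ) * (C * 0)^2) * |(x+1) - x|)) :=
      (((h2.const_mul C).pow 2).const_mul (r:ℝ)).mul_const _
    simpa using h3
  have hc0 : c₀ = 0 := by
    have hle : ‖c₀‖ ≤ 0 := by
      apply ge_of_tendsto hlim
      filter_upwards [eventually_ge_atTop (0:ℝ)] with Y hY
      show ‖c₀‖ ≤ _
      rw [← hconst Y]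
      exact hMbound Y hY
    exact norm_le_zero_iff.mp hle
  -- interpret the real-segment integral as an integral of a nonnegative function
  set g : ℝ → ℝ := fun t => ∑ j, Complex.normSq (F ((t:ℝ):ℂ) j) with hg
  have hgnn : ∀ t : ℝ, 0 ≤ g t := fun t => Finset.sum_nonneg fun j _ => Complex.normSq_nonneg _
  have hreal : ∀ t : ℝ, φ ((t:ℂ)) = ((g t : ℝ) : ℂ) := by
    intro t
    show (∑ j, F ((t:ℝ):ℂ) j * (starRingEnd ℂ) (F ((starRingEnd ℂ) ((t:ℝ):ℂ)) j)) = _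
    rw [Complex.conj_ofReal]
    push_cast [hg]
    apply Finset.sum_congr rfl
    intro j _
    rw [Complex.mul_conj]
  have hgcont : ContinuousOn g (Icc x (x+1)) := by
    apply continuousOn_finset_sum
    intro j _
    apply Complex.continuous_normSq.comp_continuousOn
    apply (continuous_apply j).comp_continuousOn
    apply hFcont.comp Complex.continuous_ofReal.continuousOn
    intro t ht
    exact ⟨by simpa using ht.1, by simpa using ht.2⟩
  have hgint : IntervalIntegrable g MeasureTheory.volume x (x+1) :=
    (hgcont.mono (by rw [Set.uIcc_of_le h01])).intervalIntegrable
  have hgzero : (∫ t in x..(x+1), g t) = 0 := by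
    have h1 : c₀ = (((∫ t in x..(x+1), g t) : ℝ) : ℂ) := by
      rw [hc₀, intervalIntegral.integral_congr (fun t _ => hreal t),
        intervalIntegral.integral_ofReal]
    rw [hc0] at h1
    exact (Complex.ofReal_eq_zero.mp h1.symm)
  -- the nonnegative continuous function g vanishes on the open interval
  have hg0 : ∀ t ∈ Ioo x (x+1), g t = 0 := by
    intro t₀ ht₀
    by_contra hne
    have hpos : 0 < g t₀ := lt_of_le_of_ne (hgnn t₀) (Ne.symm hne)
    have hct : ContinuousAt g t₀ := by
      apply (hgcont t₀ (Ioo_subset_Icc_self ht₀)).continuousAt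
      exact Icc_mem_nhds ht₀.1 ht₀.2
    have hev : ∀ᶠ t in nhds t₀, g t₀ / 2 < g t ∧ t ∈ Ioo x (x+1) := by
      apply Filter.Eventually.and
      · exact hct.eventually_const_lt (half_lt_self hpos)
      · exact isOpen_Ioo.mem_nhds ht₀
    rw [Metric.eventually_nhds_iff] at hev
    obtain ⟨ε, hε, hball⟩ := hev
    set a := t₀ - ε/2 with ha
    set b := t₀ + ε/2 with hb
    have hab : a < b := by rw [ha, hb]; linarith
    have hIcc : ∀ t ∈ Icc a b, g t₀ / 2 < g t ∧ t ∈ Ioo x (x+1) := by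
      intro t ht
      rw [Set.mem_Icc, ha, hb] at ht
      apply hball
      rw [Real.dist_eq, abs_sub_lt_iff]
      constructor <;> [linarith [ht.2]; linarith [ht.1]]
    have haIoo : a ∈ Ioo x (x+1) := (hIcc a ⟨le_refl a, hab.le⟩).2
    have hbIoo : b ∈ Ioo x (x+1) := (hIcc b ⟨hab.le, le_refl b⟩).2
    have hint1 : IntervalIntegrable g MeasureTheory.volume x a :=
      hgint.mono_set (by
        rw [Set.uIcc_of_le h01, Set.uIcc_of_le (le_of_lt haIoo.1)]
        exact Icc_subset_Icc (le_refl x) (le_of_lt haIoo.2))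
    have hint2 : IntervalIntegrable g MeasureTheory.volume a b :=
      hgint.mono_set (by
        rw [Set.uIcc_of_le h01, Set.uIcc_of_le hab.le]
        exact Icc_subset_Icc (le_of_lt haIoo.1) (le_of_lt hbIoo.2))
    have hint3 : IntervalIntegrable g MeasureTheory.volume b (x+1) :=
      hgint.mono_set (by
        rw [Set.uIcc_of_le h01, Set.uIcc_of_le (le_of_lt hbIoo.2)]
        exact Icc_subset_Icc (le_of_lt hbIoo.1) (le_refl (x+1)))
    have hsplit : (∫ t in x..(x+1), g t)
        = (∫ t in x..a, g t) + (∫ t in a..b, g t) + (∫ t in b..(x+1), g t) := by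
      rw [intervalIntegral.integral_add_adjacent_intervals hint1 hint2,
        intervalIntegral.integral_add_adjacent_intervals (hint1.trans hint2) hint3]
    have hnn1 : 0 ≤ ∫ t in x..a, g t :=
      intervalIntegral.integral_nonneg (le_of_lt haIoo.1) (fun t _ => hgnn t)
    have hnn3 : 0 ≤ ∫ t in b..(x+1), g t :=
      intervalIntegral.integral_nonneg (le_of_lt hbIoo.2) (fun t _ => hgnn t)
    have hmid : (b - a) * (g t₀ / 2) ≤ ∫ t in a..b, g t := by
      have := intervalIntegral.integral_mono_on hab.le
        (intervalIntegrable_const (c := g t₀ / 2)) hint2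
        (fun t ht => (hIcc t ht).1.le)
      rwa [intervalIntegral.integral_const, smul_eq_mul] at this
    have hba : 0 < b - a := by linarith
    have : 0 < (∫ t in x..(x+1), g t) := by
      have h6 : 0 < (b - a) * (g t₀ / 2) := by positivity
      rw [hsplit]; linarith
    rw [hgzero] at this
    exact lt_irrefl 0 this
  -- finally : F vanishes on the real open segment
  intro t ht
  funext j
  have h7 := hg0 t ht
  rw [hg] at h7
  have h8 := (Finset.sum_eq_zero_iff_of_nonneg
    (fun j _ => Complex.normSq_nonneg (F ((t:ℝ):ℂ) j))).mp h7 j (Finset.mem_univ j)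
  exact Complex.normSq_eq_zero.mp h8



set_option maxHeartbeats 1000000 in
/-- For a unitary difference equation, the dual boundary problem
`F(ξ+1)A(ξ) = F(ξ)` in the strip has no nonzero decaying row-vector solution. -/
theorem statement18 (r : ℕ) (x : ℝ) (A : ℂ → Matrix (Fin r) (Fin r) ℂ)
    (U : Set ℂ) (hUopen : IsOpen U) (hUstrip : {z : ℂ | x ≤ z.re ∧ z.re ≤ x + 1} ⊆ U)
    (hAhol : DifferentiableOn ℂ A U)
    (hAunit : ∀ z : ℂ, x ≤ z.re ∧ z.re ≤ x + 1 → (A ((starRingEnd ℂ) z))ᴴ = (A z)⁻¹)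
    (F : ℂ → Fin r → ℂ)
    (hFcont : ContinuousOn F {z : ℂ | x ≤ z.re ∧ z.re ≤ x + 1})
    (hFhol : DifferentiableOn ℂ F {z : ℂ | x < z.re ∧ z.re < x + 1})
    (hFbd : ∀ ξ : ℂ, ξ.re = x → Matrix.vecMul (F (ξ + 1)) (A ξ) = F ξ)
    (C δ : ℝ) (hC : 0 < C) (hδ : 0 < δ)
    (hdecay : ∀ z : ℂ, x ≤ z.re ∧ z.re ≤ x + 1 →
      ‖F z‖ ≤ C * (1 + |z.im|) ^ (-(1 + δ))) :
    ∀ z : ℂ, x ≤ z.re ∧ z.re ≤ x + 1 → F z = 0 := by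
  have h01 : x ≤ x + 1 := by linarith
  have hdetan : AnalyticOnNhd ℂ (fun z => (A z).det) {z : ℂ | x ≤ z.re ∧ z.re ≤ x + 1} :=
    ((det_diffOn r A U hAhol).analyticOnNhd hUopen).mono hUstrip
  by_cases hdeg : Set.EqOn (fun z => (A z).det) 0 {z : ℂ | x ≤ z.re ∧ z.re ≤ x + 1}
  · -- degenerate case : A vanishes on the strip
    have hA0F : ∀ ξ : ℂ, ξ.re = x → F ξ = 0 := by
      intro ξ hξ
      have hcK : (starRingEnd ℂ) ξ ∈ {z : ℂ | x ≤ z.re ∧ z.re ≤ x + 1} :=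
        ⟨by simp [hξ], by simp [hξ]⟩
      have hdet0 : ¬ IsUnit ((A ((starRingEnd ℂ) ξ)).det) := by
        have h4 := hdeg hcK
        simp only [Pi.zero_apply] at h4
        simp [isUnit_iff_ne_zero, h4]
      have hinv0 : (A ((starRingEnd ℂ) ξ))⁻¹ = 0 :=
        Matrix.nonsing_inv_apply_not_isUnit _ hdet0
      have h3 := hAunit ((starRingEnd ℂ) ξ) hcK
      rw [Complex.conj_conj, hinv0] at h3
      have hA0 : A ξ = 0 := Matrix.conjTranspose_eq_zero.mp h3
      rw [← hFbd ξ hξ, hA0, Matrix.vecMul_zero]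
    have hcenter := degenCase r x F hFcont hFhol C δ hC hδ hdecay hA0F
    apply finalStep r x F hFcont hFhol
    intro j
    set z₀ : ℂ := ((x + 2⁻¹ : ℝ) : ℂ) with hz₀
    set u : ℕ → ℂ := fun n => z₀ + ((1/(n+1) : ℝ) : ℂ) * Complex.I with hu
    have hupos : ∀ n : ℕ, (0:ℝ) < 1/(n+1) := fun n => by positivity
    have hune : ∀ n, u n ≠ z₀ := by
      intro n h
      have h2 := congrArg Complex.im h
      simp only [hu, hz₀, Complex.add_im, Complex.mul_im, Complex.I_im, Complex.I_re,
        Complex.ofReal_im, Complex.ofReal_re] at h2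
      have := hupos n
      simp only [mul_one, mul_zero, add_zero, zero_mul] at h2
      linarith
    have htendν : Filter.Tendsto u Filter.atTop (nhds z₀) := by
      have h0 : Filter.Tendsto (fun n : ℕ => (1/(n+1) : ℝ)) Filter.atTop (nhds 0) :=
        tendsto_one_div_add_atTop_nhds_zero_nat
      have h1 : Filter.Tendsto (fun n : ℕ => ((1/(n+1) : ℝ) : ℂ)) Filter.atTop (nhds ((0:ℝ):ℂ)) :=
        (Complex.continuous_ofReal.tendsto 0).comp h0
      have h2 : Filter.Tendsto (fun n : ℕ => ((1/(n+1) : ℝ) : ℂ) * Complex.I)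
          Filter.atTop (nhds 0) := by
        simpa using h1.mul_const Complex.I
      have h3 : Filter.Tendsto u Filter.atTop (nhds (z₀ + 0)) := tendsto_const_nhds.add h2
      rw [add_zero] at h3
      exact h3
    have htend : Filter.Tendsto u Filter.atTop (nhdsWithin z₀ {z₀}ᶜ) :=
      tendsto_nhdsWithin_iff.mpr ⟨htendν, Filter.Eventually.of_forall (fun n => hune n)⟩
    apply htend.frequently
    apply Filter.Frequently.of_forall
    intro n
    have hre : (u n).re = x + 2⁻¹ := by simp [hu, hz₀]
    exact congrFun (hcenter (u n) hre) j
  · -- nondegenerate case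
    have hIoo := nondegenCase r x A hAunit hdetan F hFcont hFhol hFbd C δ hC hδ hdecay hdeg
    apply finalStep r x F hFcont hFhol
    intro j
    set v : ℕ → ℝ := fun n => x + 2⁻¹ + 1/(n+3) with hv
    have hvpos : ∀ n : ℕ, (0:ℝ) < 1/((n:ℝ)+3) := fun n => by positivity
    have hvlt : ∀ n : ℕ, (1:ℝ)/((n:ℝ)+3) ≤ 1/3 := by
      intro n
      apply one_div_le_one_div_of_le (by norm_num)
      have : (0:ℝ) ≤ (n:ℝ) := Nat.cast_nonneg n
      linarith
    have hmem : ∀ n, v n ∈ Ioo x (x+1) := by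
      intro n
      constructor
      · have := hvpos n; simp only [hv]; linarith
      · have := hvlt n; simp only [hv]; linarith
    have hune : ∀ n, ((v n : ℝ) : ℂ) ≠ ((x + 2⁻¹ : ℝ) : ℂ) := by
      intro n h
      rw [Complex.ofReal_inj] at h
      have := hvpos n
      simp only [hv] at h
      linarith
    have htendν : Filter.Tendsto (fun n => ((v n : ℝ) : ℂ)) Filter.atTop
        (nhds (((x + 2⁻¹ : ℝ) : ℂ))) := by
      have h0 : Filter.Tendsto (fun n : ℕ => (1/((n:ℝ)+3) : ℝ)) Filter.atTop (nhds 0) := by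
        apply squeeze_zero (fun n => (hvpos n).le)
          (g := fun n : ℕ => 1/((n:ℝ)+1)) ?_ tendsto_one_div_add_atTop_nhds_zero_nat
        intro n
        apply one_div_le_one_div_of_le (by positivity)
        linarith
      have h3 : Filter.Tendsto v Filter.atTop (nhds (x + 2⁻¹ + 0)) :=
        tendsto_const_nhds.add h0
      rw [add_zero] at h3
      exact (Complex.continuous_ofReal.tendsto _).comp h3
    have htend : Filter.Tendsto (fun n => ((v n : ℝ) : ℂ)) Filter.atTop
        (nhdsWithin (((x + 2⁻¹ : ℝ) : ℂ)) {(((x + 2⁻¹ : ℝ)) : ℂ)}ᶜ) :=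
      tendsto_nhdsWithin_iff.mpr ⟨htendν, Filter.Eventually.of_forall (fun n => hune n)⟩
    apply htend.frequently
    apply Filter.Frequently.of_forall
    intro n
    exact congrFun (hIoo (v n) (hmem n)) j
end
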